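/- Fix an integer s ≥ 0 and let p = p(n) → ∞ with (ln p)/n → 0 as n → ∞. Then the normalizing constants a(p,n,s) = 1 − (p−s)^{−2/(n−s−2)} c(p,n,s) and b(p,n,s) = (2/(n−s−2)) (p−s)^{−2/(n−s−2)} c(p,n,s), where c(p,n,s) = {(1/2)(n−s−2) B(1/2,(n−s−2)/2) √(1 − (p−s)^{−2/(n−s−2)})}^{2/(n−s−2)}, both converge to 0 as n → ∞. -/

import Mathlib

/-! Write `m = n - s - 2`, `q = p - s` and `c(p,n,s) = A ^ (2/m)`, so that
`q ^ (-2/m) * c(p,n,s) = exp (2 * (log A / m) - 2 * (log q / m))`, while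
`a = 1 - q ^ (-2/m) * c` and `b = (2/m) * q ^ (-2/m) * c`; it suffices that both logarithmic
quotients tend to `0`. For `log q / m` this is the hypothesis, since `q ≤ p` and `m ~ n`.
For the Beta factor `A`, monotonicity of `Γ` on `[2, ∞)` gives `1 ≤ t B(1/2, t)` and
`B(1/2, t) ≤ 2`, and `exp u ≥ 1 + u` gives `1 - q ^ (-2/m) ≥ 1/(m+1)`; hence
`1/(m+1) ≤ A ≤ m`, so `|log A| ≤ 2 log m = o(m)`. -/

open Filter

noncomputable section

/-- The Beta function `B(a,b)`. -/
def Bfun (a b : ℝ) : ℝ := Real.Gamma a * Real.Gamma b / Real.Gamma (a + b)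

/-- Correction factor `c(p,n,s)`. -/
def cconst (p n s : ℕ) : ℝ :=
  (((n : ℝ) - s - 2) / 2 * Bfun (1 / 2) (((n : ℝ) - s - 2) / 2) *
      Real.sqrt (1 - ((p : ℝ) - s) ^ (-(2 : ℝ) / ((n : ℝ) - s - 2)))) ^
    ((2 : ℝ) / ((n : ℝ) - s - 2))

/-- Centering constant `a(p,n,s)`. -/
def aconst (p n s : ℕ) : ℝ :=
  1 - ((p : ℝ) - s) ^ (-(2 : ℝ) / ((n : ℝ) - s - 2)) * cconst p n s

/-- Scaling constant `b(p,n,s)`. -/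
def bconst (p n s : ℕ) : ℝ :=
  2 / ((n : ℝ) - s - 2) * ((p : ℝ) - s) ^ (-(2 : ℝ) / ((n : ℝ) - s - 2)) * cconst p n s

open Real Topology

lemma Bfun_one_half_bounds {t : ℝ} (ht : 2 ≤ t) :
    1 ≤ t * Bfun (1 / 2) t ∧ Bfun (1 / 2) t ≤ 2 := by
  have ht0 : 0 < t := by linarith
  have hlow : Gamma t ≤ Gamma (1 / 2 + t) :=
    Gamma_strictMonoOn_Ici.monotoneOn ht (by simp only [Set.mem_Ici]; linarith) (by linarith)
  have hup : Gamma (1 / 2 + t) ≤ t * Gamma t := by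
    rw [← Gamma_add_one ht0.ne']
    exact Gamma_strictMonoOn_Ici.monotoneOn (by simp only [Set.mem_Ici]; linarith)
      (by simp only [Set.mem_Ici]; linarith) (by linarith)
  have hGt : 0 < Gamma t := Gamma_pos_of_pos ht0
  have hGth : 0 < Gamma (1 / 2 + t) := Gamma_pos_of_pos (by linarith)
  have hsqrt_pi : 1 ≤ √π ∧ √π ≤ 2 :=
    ⟨one_le_sqrt.2 (by linarith [pi_gt_three]),
      sqrt_le_iff.2 ⟨by norm_num, by linarith [pi_le_four]⟩⟩
  rw [Bfun, Gamma_one_half_eq]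
  constructor
  · rw [← mul_div_assoc, one_le_div hGth]
    nlinarith
  · rw [div_le_iff₀ hGth]
    nlinarith

def betaFactor (q m : ℝ) : ℝ := m / 2 * Bfun (1 / 2) (m / 2) * √(1 - q ^ (-2 / m))

lemma cconst_eq_betaFactor_rpow (p n s : ℕ) :
    cconst p n s = betaFactor ((p : ℝ) - s) ((n : ℝ) - s - 2) ^ (2 / ((n : ℝ) - s - 2)) := rfl

lemma inv_add_one_le_one_sub_rpow_neg {q m : ℝ} (hq : 2 ≤ q) (hm : 0 < m) :
    (m + 1)⁻¹ ≤ 1 - q ^ (-2 / m) := by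
  have hlog : 1 ≤ 2 * log q := by
    linarith [log_two_gt_d9, log_le_log two_pos hq]
  have hu : 1 / m ≤ 2 * log q / m := by gcongr
  have hx : q ^ (-2 / m) ≤ (1 / m + 1)⁻¹ :=
    calc q ^ (-2 / m) = (exp (2 * log q / m))⁻¹ := by
          rw [rpow_def_of_pos (by linarith), ← exp_neg]; ring_nf
      _ ≤ (2 * log q / m + 1)⁻¹ := inv_anti₀ (by positivity) (add_one_le_exp _)
      _ ≤ (1 / m + 1)⁻¹ := inv_anti₀ (by positivity) (by linarith)
  have : (1 / m + 1)⁻¹ = 1 - (m + 1)⁻¹ := by field_simp; ring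
  linarith

lemma betaFactor_le {q m : ℝ} (hq : 0 ≤ q) (hm : 4 ≤ m) : betaFactor q m ≤ m := by
  have hB := (Bfun_one_half_bounds (t := m / 2) (by linarith)).2
  have hsqrt : √(1 - q ^ (-2 / m)) ≤ 1 := sqrt_le_one.2 (by linarith [rpow_nonneg hq (-2 / m)])
  have : m / 2 * Bfun (1 / 2) (m / 2) ≤ m := by nlinarith
  unfold betaFactor
  nlinarith [sqrt_nonneg (1 - q ^ (-2 / m))]

lemma inv_add_one_le_betaFactor {q m : ℝ} (hq : 2 ≤ q) (hm : 4 ≤ m) :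
    (m + 1)⁻¹ ≤ betaFactor q m := by
  set y := 1 - q ^ (-2 / m)
  have hy : (m + 1)⁻¹ ≤ y := inv_add_one_le_one_sub_rpow_neg hq (by linarith)
  have hy1 : y ≤ 1 := by linarith [rpow_nonneg (show 0 ≤ q by linarith) (-2 / m)]
  have hy0 : 0 ≤ y := le_trans (by positivity) hy
  have hysqrt : y ≤ √y := le_sqrt_of_sq_le (by nlinarith)
  have hB := (Bfun_one_half_bounds (t := m / 2) (by linarith)).1
  calc (m + 1)⁻¹ ≤ 1 * √y := by linarith
    _ ≤ betaFactor q m := by unfold betaFactor; gcongr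

lemma betaFactor_pos {q m : ℝ} (hq : 2 ≤ q) (hm : 4 ≤ m) : 0 < betaFactor q m :=
  (inv_add_one_le_betaFactor hq hm).trans_lt' (by positivity)

lemma abs_log_betaFactor_le {q m : ℝ} (hq : 2 ≤ q) (hm : 4 ≤ m) :
    |log (betaFactor q m)| ≤ 2 * log m := by
  have hlow := inv_add_one_le_betaFactor hq hm
  have hA := betaFactor_pos hq hm
  have hlogm : 0 ≤ log m := log_nonneg (by linarith)
  rw [abs_le]
  constructor
  · calc -(2 * log m) = log (m ^ 2)⁻¹ := by rw [log_inv, log_pow]; push_cast; ring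
      _ ≤ log (m + 1)⁻¹ :=
        log_le_log (by positivity) (inv_anti₀ (by positivity) (by nlinarith))
      _ ≤ log (betaFactor q m) := log_le_log (by positivity) hlow
  · linarith [log_le_log hA (betaFactor_le (by linarith) hm)]

section Asymptotics

variable {ι : Type*} {l : Filter ι} {y m : ι → ℝ}

lemma tendsto_log_div_of_abs_log_le (k : ℝ) (hm : Tendsto m l atTop)
    (hy : ∀ᶠ i in l, |log (y i)| ≤ k * log (m i)) :
    Tendsto (fun i => log (y i) / m i) l (𝓝 0) := by
  have hlogm : Tendsto (fun i => k * (log (m i) / m i)) l (𝓝 0) := by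
    simpa using (isLittleO_log_id_atTop.tendsto_div_nhds_zero.comp hm).const_mul k
  refine squeeze_zero_norm' ?_ hlogm
  filter_upwards [hy, hm.eventually_gt_atTop 0] with i hyi hmi
  rw [norm_div, Real.norm_eq_abs, Real.norm_eq_abs, abs_of_pos hmi, mul_div_assoc']
  gcongr

lemma tendsto_rpow_div_of_log_div (k : ℝ) (hy : ∀ᶠ i in l, 0 < y i)
    (h : Tendsto (fun i => log (y i) / m i) l (𝓝 0)) :
    Tendsto (fun i => y i ^ (k / m i)) l (𝓝 1) := by
  have : Tendsto (fun i => exp (k * (log (y i) / m i))) l (𝓝 1) := by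
    simpa using (h.const_mul k).rexp
  refine this.congr' ?_
  filter_upwards [hy] with i hyi
  rw [rpow_def_of_pos hyi]
  ring_nf

end Asymptotics

lemma tendsto_div_natCast_sub {f : ℕ → ℝ} (c : ℝ)
    (h : Tendsto (fun n => f n / n) atTop (𝓝 0)) :
    Tendsto (fun n => f n / (n - c)) atTop (𝓝 0) := by
  have := h.mul (tendsto_natCast_div_add_atTop (-c : ℝ))
  rw [zero_mul] at this
  refine this.congr' ?_
  filter_upwards [eventually_ne_atTop 0] with n hn
  rw [← sub_eq_add_neg, div_mul_div_cancel₀ (by exact_mod_cast hn)]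

lemma tendsto_log_sub_div_natCast_sub {p : ℕ → ℝ} (hp : Tendsto p atTop atTop)
    (h : Tendsto (fun n => log (p n) / n) atTop (𝓝 0)) {s : ℝ} (hs : 0 ≤ s) (c : ℝ) :
    Tendsto (fun n => log (p n - s) / (n - c)) atTop (𝓝 0) := by
  have hq := tendsto_atTop_add_const_right _ (-s) hp
  have hm := tendsto_atTop_add_const_right _ (-c) tendsto_natCast_atTop_atTop
  refine tendsto_of_tendsto_of_tendsto_of_le_of_le' tendsto_const_nhds
    (tendsto_div_natCast_sub c h) ?_ ?_
  all_goals
    filter_upwards [hq.eventually_ge_atTop 1, hm.eventually_gt_atTop 0] with n hqn hmn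
    rw [← sub_eq_add_neg] at hqn hmn
  · exact div_nonneg (log_nonneg hqn) hmn.le
  · exact div_le_div_of_nonneg_right (log_le_log (by linarith) (by linarith)) hmn.le

/-- **Vanishing of the normalizing constants.**  Fix `s` and let `p = p(n) → ∞` with
`(ln p(n))/n → 0` as `n → ∞`.  Then both normalizing constants `a(p(n), n, s)` and
`b(p(n), n, s)` converge to `0` as `n → ∞`. -/
theorem normalizing_constants_vanish
    (s : ℕ) (p : ℕ → ℕ)
    (hp : Tendsto p atTop atTop)
    (hlogp : Tendsto (fun n => Real.log (p n) / n) atTop (nhds 0)) :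
    Tendsto (fun n => aconst (p n) n s) atTop (nhds 0) ∧
      Tendsto (fun n => bconst (p n) n s) atTop (nhds 0) := by
  set m : ℕ → ℝ := fun n => (n : ℝ) - s - 2
  set q : ℕ → ℝ := fun n => (p n : ℝ) - s
  have hm : Tendsto m atTop atTop :=
    (tendsto_atTop_add_const_right _ (-(s + 2 : ℝ)) tendsto_natCast_atTop_atTop).congr
      fun n => by simp only [m]; ring
  have hq : Tendsto q atTop atTop :=
    tendsto_atTop_add_const_right _ (-(s : ℝ)) (tendsto_natCast_atTop_atTop.comp hp)
  have hlogq : Tendsto (fun n => log (q n) / m n) atTop (𝓝 0) :=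
    tendsto_log_sub_div_natCast_sub (tendsto_natCast_atTop_atTop.comp hp) hlogp
      (Nat.cast_nonneg s) (s + 2) |>.congr fun n => by simp only [q, m, sub_sub, Function.comp]
  have hlarge : ∀ᶠ n in atTop, 2 ≤ q n ∧ 4 ≤ m n :=
    (hq.eventually_ge_atTop 2).and (hm.eventually_ge_atTop 4)
  have hlogA : Tendsto (fun n => log (betaFactor (q n) (m n)) / m n) atTop (𝓝 0) :=
    tendsto_log_div_of_abs_log_le 2 hm <| hlarge.mono fun n h => abs_log_betaFactor_le h.1 h.2
  have hApos : ∀ᶠ n in atTop, 0 < betaFactor (q n) (m n) :=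
    hlarge.mono fun n h => betaFactor_pos h.1 h.2
  have hprod : Tendsto (fun n => q n ^ (-2 / m n) * cconst (p n) n s) atTop (𝓝 1) := by
    simpa [cconst_eq_betaFactor_rpow] using
      (tendsto_rpow_div_of_log_div (-2) (hq.eventually_gt_atTop 0) hlogq).mul
        (tendsto_rpow_div_of_log_div 2 hApos hlogA)
  have ha := hprod.const_sub 1
  have hb := (tendsto_const_nhds (x := (2 : ℝ)).div_atTop hm).mul hprod
  rw [sub_self] at ha
  rw [zero_mul] at hb
  exact ⟨ha.congr fun n => rfl, hb.congr fun n => (mul_assoc _ _ _).symm⟩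

end
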